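/- arXiv:2208.05815 — 2 statements merged into one kernel-verified Lean document; each statement's English description precedes it below -/
import Mathlib

section
/- Let K be a valued field and V a finite-dimensional valued K-vector space of dimension n. Then the number of orbits of the Γ-action on Γ(V) is at most n. -/
/-!
Choose for every orbit of `Γ` on `Γ(V)` a nonzero vector whose value lies in it. By the
ultrametric inequality, a sum of nonzero vectors with pairwise distinct values takes the value
of one of its summands, in particular it is nonzero. Multiplying by nonzero scalars moves values
only within their orbits, so a nontrivial linear relation among the chosen vectors would be such
a sum adding up to zero. Hence they are linearly independent, and there are at most `n` orbits.
-/

open AddAction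

section ValuedVectorSpace

variable {K : Type*} [Field K] {V : Type*} [AddCommGroup V] [Module K V]
  {Γ : Type*} [AddCommGroup Γ] [LinearOrder Γ] [IsOrderedAddMonoid Γ]
  {ΓV : Type*} [AddAction Γ ΓV]
  {valK : K → Γ} {val : V → ΓV}

lemma map_neg_one_eq_zero_of_map_mul
    (hvalK : ∀ a b : K, a ≠ 0 → b ≠ 0 → valK (a * b) = valK a + valK b) :
    valK (-1) = 0 := by
  have hone : valK 1 = 0 := by
    simpa using hvalK 1 1 one_ne_zero one_ne_zero
  have hsq := hvalK (-1) (-1) (neg_ne_zero.mpr one_ne_zero) (neg_ne_zero.mpr one_ne_zero)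
  rw [neg_mul_neg, one_mul, hone, ← two_nsmul] at hsq
  exact two_nsmul_eq_zero.mp hsq.symm

lemma val_neg_of_map_mul
    (hvalK : ∀ a b : K, a ≠ 0 → b ≠ 0 → valK (a * b) = valK a + valK b)
    (hscalar : ∀ (a : K) (v : V), a ≠ 0 → v ≠ 0 → val (a • v) = valK a +ᵥ val v)
    {w : V} (hw : w ≠ 0) : val (-w) = val w := by
  rw [← neg_one_smul K w, hscalar _ _ (neg_ne_zero.mpr one_ne_zero) hw,
    map_neg_one_eq_zero_of_map_mul hvalK, zero_vadd]

lemma add_ne_zero_of_val_ne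
    (hvalK : ∀ a b : K, a ≠ 0 → b ≠ 0 → valK (a * b) = valK a + valK b)
    (hscalar : ∀ (a : K) (v : V), a ≠ 0 → v ≠ 0 → val (a • v) = valK a +ᵥ val v)
    {u w : V} (hw : w ≠ 0) (hne : val u ≠ val w) : u + w ≠ 0 := fun h ↦ hne <| by
  rw [eq_neg_of_add_eq_zero_left h, val_neg_of_map_mul hvalK hscalar hw]

variable [LinearOrder ΓV]

lemma val_add_eq_left_of_lt
    (hvalK : ∀ a b : K, a ≠ 0 → b ≠ 0 → valK (a * b) = valK a + valK b)
    (hscalar : ∀ (a : K) (v : V), a ≠ 0 → v ≠ 0 → val (a • v) = valK a +ᵥ val v)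
    (hult : ∀ v w : V, v ≠ 0 → w ≠ 0 → v + w ≠ 0 → min (val v) (val w) ≤ val (v + w))
    {u w : V} (hu : u ≠ 0) (hw : w ≠ 0) (hlt : val u < val w) :
    val (u + w) = val u := by
  have hsum := add_ne_zero_of_val_ne hvalK hscalar hw hlt.ne
  refine le_antisymm ?_ (min_eq_left hlt.le ▸ hult u w hu hw hsum)
  by_contra! hgt
  have hle := hult (u + w) (-w) hsum (neg_ne_zero.mpr hw) (by rwa [add_neg_cancel_right])
  rw [add_neg_cancel_right, val_neg_of_map_mul hvalK hscalar hw] at hle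
  exact (lt_min hgt hlt).not_ge hle

lemma val_add_eq_min_of_val_ne
    (hvalK : ∀ a b : K, a ≠ 0 → b ≠ 0 → valK (a * b) = valK a + valK b)
    (hscalar : ∀ (a : K) (v : V), a ≠ 0 → v ≠ 0 → val (a • v) = valK a +ᵥ val v)
    (hult : ∀ v w : V, v ≠ 0 → w ≠ 0 → v + w ≠ 0 → min (val v) (val w) ≤ val (v + w))
    {u w : V} (hu : u ≠ 0) (hw : w ≠ 0) (hne : val u ≠ val w) :
    val (u + w) = min (val u) (val w) := by
  rcases hne.lt_or_gt with hlt | hgt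
  · rw [val_add_eq_left_of_lt hvalK hscalar hult hu hw hlt, min_eq_left hlt.le]
  · rw [add_comm, val_add_eq_left_of_lt hvalK hscalar hult hw hu hgt, min_eq_right hgt.le]

lemma sum_ne_zero_and_exists_val_sum_eq
    (hvalK : ∀ a b : K, a ≠ 0 → b ≠ 0 → valK (a * b) = valK a + valK b)
    (hscalar : ∀ (a : K) (v : V), a ≠ 0 → v ≠ 0 → val (a • v) = valK a +ᵥ val v)
    (hult : ∀ v w : V, v ≠ 0 → w ≠ 0 → v + w ≠ 0 → min (val v) (val w) ≤ val (v + w))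
    {ι : Type*} {w : ι → V} {s : Finset ι} (hs : s.Nonempty) (hw : ∀ i ∈ s, w i ≠ 0)
    (hinj : Set.InjOn (fun i ↦ val (w i)) s) :
    ∑ i ∈ s, w i ≠ 0 ∧ ∃ j ∈ s, val (∑ i ∈ s, w i) = val (w j) := by
  induction hs using Finset.Nonempty.cons_induction with
  | singleton a => simpa using hw a (Finset.mem_singleton_self a)
  | cons a t hat ht ih =>
    simp only [Finset.coe_cons, Set.injOn_insert (Finset.mem_coe.not.mpr hat)] at hinj
    have hwt : ∀ i ∈ t, w i ≠ 0 := fun i hi ↦ hw i (Finset.mem_cons_of_mem hi)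
    obtain ⟨hsum, j, hj, hval⟩ := ih hwt hinj.1
    have hwa := hw a (Finset.mem_cons_self a t)
    have hne : val (w a) ≠ val (∑ i ∈ t, w i) :=
      hval ▸ fun h ↦ hinj.2 ⟨j, Finset.mem_coe.mpr hj, h.symm⟩
    rw [Finset.sum_cons]
    refine ⟨add_ne_zero_of_val_ne hvalK hscalar hsum hne, ?_⟩
    rw [val_add_eq_min_of_val_ne hvalK hscalar hult hwa hsum hne]
    rcases min_choice (val (w a)) (val (∑ i ∈ t, w i)) with h | h
    · exact ⟨a, Finset.mem_cons_self a t, h⟩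
    · exact ⟨j, Finset.mem_cons_of_mem hj, h.trans hval⟩

lemma linearIndependent_of_injective_orbit_val
    (hvalK : ∀ a b : K, a ≠ 0 → b ≠ 0 → valK (a * b) = valK a + valK b)
    (hscalar : ∀ (a : K) (v : V), a ≠ 0 → v ≠ 0 → val (a • v) = valK a +ᵥ val v)
    (hult : ∀ v w : V, v ≠ 0 → w ≠ 0 → v + w ≠ 0 → min (val v) (val w) ≤ val (v + w))
    {ι : Type*} {v : ι → V} (hv : ∀ i, v i ≠ 0)
    (hinj : Function.Injective fun i ↦ (⟦val (v i)⟧ : orbitRel.Quotient Γ ΓV)) :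
    LinearIndependent K v := by
  classical
  rw [linearIndependent_iff']
  intro s g hg i hi
  by_contra hgi
  set t := s.filter fun j ↦ g j • v j ≠ 0
  have ht : t.Nonempty := ⟨i, Finset.mem_filter.mpr ⟨hi, smul_ne_zero hgi (hv i)⟩⟩
  have hterm : ∀ j ∈ t, g j • v j ≠ 0 := fun j hj ↦ (Finset.mem_filter.mp hj).2
  have hinjt : Set.InjOn (fun j ↦ val (g j • v j)) t := by
    intro j hj k hk hjk
    apply hinj
    have hj' := hterm j hj
    have hk' := hterm k hk
    simp only [hscalar _ _ (left_ne_zero_of_smul hj') (right_ne_zero_of_smul hj'),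
      hscalar _ _ (left_ne_zero_of_smul hk') (right_ne_zero_of_smul hk')] at hjk
    simpa only [orbitRel.Quotient.quotient_vadd_eq] using
      congrArg (⟦·⟧ : ΓV → orbitRel.Quotient Γ ΓV) hjk
  refine (sum_ne_zero_and_exists_val_sum_eq hvalK hscalar hult ht hterm hinjt).1 ?_
  rwa [Finset.sum_filter_ne_zero]

lemma exists_linearIndependent_orbitRel_quotient
    (hvalK : ∀ a b : K, a ≠ 0 → b ≠ 0 → valK (a * b) = valK a + valK b)
    (hsurj : ∀ g : ΓV, ∃ v : V, v ≠ 0 ∧ val v = g)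
    (hscalar : ∀ (a : K) (v : V), a ≠ 0 → v ≠ 0 → val (a • v) = valK a +ᵥ val v)
    (hult : ∀ v w : V, v ≠ 0 → w ≠ 0 → v + w ≠ 0 → min (val v) (val w) ≤ val (v + w)) :
    ∃ v : orbitRel.Quotient Γ ΓV → V, LinearIndependent K v := by
  choose v hv hval using fun q : orbitRel.Quotient Γ ΓV ↦ hsurj q.out
  refine ⟨v, linearIndependent_of_injective_orbit_val hvalK hscalar hult hv fun p q h ↦ ?_⟩
  simpa only [hval, Quotient.out_eq] using h

end ValuedVectorSpace

theorem valued_vector_space_orbits_le_dim_general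
    (K : Type*) [Field K] (V : Type*) [AddCommGroup V] [Module K V]
    (Γ : Type*) [AddCommGroup Γ] [LinearOrder Γ] [IsOrderedAddMonoid Γ]
    (ΓV : Type*) [LinearOrder ΓV] [AddAction Γ ΓV]
    (valK : K → Γ) (val : V → ΓV)
    (hvalK : ∀ a b : K, a ≠ 0 → b ≠ 0 → valK (a * b) = valK a + valK b)
    (hsurj : ∀ g : ΓV, ∃ v : V, v ≠ 0 ∧ val v = g)
    (hscalar : ∀ (a : K) (v : V), a ≠ 0 → v ≠ 0 → val (a • v) = valK a +ᵥ val v)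
    (hult : ∀ v w : V, v ≠ 0 → w ≠ 0 → v + w ≠ 0 → min (val v) (val w) ≤ val (v + w))
    (n : ℕ) [FiniteDimensional K V] (hdim : Module.finrank K V = n) :
    ∃ S : Finset (Set ΓV),
      (∀ x : ΓV, ({y : ΓV | ∃ γ : Γ, γ +ᵥ x = y} : Set ΓV) ∈ S) ∧ S.card ≤ n := by
  obtain ⟨v, hv⟩ := exists_linearIndependent_orbitRel_quotient hvalK hsurj hscalar hult
  have := hv.finite
  have := Fintype.ofFinite (orbitRel.Quotient Γ ΓV)
  refine ⟨Finset.univ.image orbitRel.Quotient.orbit,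
    fun x ↦ Finset.mem_image.mpr ⟨⟦x⟧, Finset.mem_univ _, rfl⟩, ?_⟩
  calc (Finset.univ.image orbitRel.Quotient.orbit).card
      ≤ Fintype.card (orbitRel.Quotient Γ ΓV) := Finset.card_image_le
    _ ≤ Module.finrank K V := hv.fintype_card_le_finrank
    _ = n := hdim

/-- In an `n`-dimensional valued vector space over a valued field, the number of
orbits of the value-group action on `Γ(V)` is at most `n`. -/
theorem valued_vector_space_orbits_le_dim
    (K : Type*) [Field K] (V : Type*) [AddCommGroup V] [Module K V]
    (Γ : Type*) [AddCommGroup Γ] [LinearOrder Γ] [IsOrderedAddMonoid Γ]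
    (ΓV : Type*) [LinearOrder ΓV] [AddAction Γ ΓV]
    (valK : K → Γ) (val : V → ΓV)
    (hmono1 : ∀ γ : Γ, StrictMono fun x : ΓV => γ +ᵥ x)
    (hmono2 : ∀ x : ΓV, StrictMono fun γ : Γ => γ +ᵥ x)
    (hvalK : ∀ a b : K, a ≠ 0 → b ≠ 0 → valK (a * b) = valK a + valK b)
    (hsurj : ∀ g : ΓV, ∃ v : V, v ≠ 0 ∧ val v = g)
    (hscalar : ∀ (a : K) (v : V), a ≠ 0 → v ≠ 0 → val (a • v) = valK a +ᵥ val v)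
    (hult : ∀ v w : V, v ≠ 0 → w ≠ 0 → v + w ≠ 0 → min (val v) (val w) ≤ val (v + w))
    (n : ℕ) [FiniteDimensional K V] (hdim : Module.finrank K V = n) :
    ∃ S : Finset (Set ΓV),
      (∀ x : ΓV, ({y : ΓV | ∃ γ : Γ, γ +ᵥ x = y} : Set ΓV) ∈ S) ∧ S.card ≤ n :=
  valued_vector_space_orbits_le_dim_general K V Γ ΓV valK val hvalK hsurj hscalar hult n hdim
end

section
/- Let V be an n-dimensional valued K-vector space with a splitting basis v₁, …, vₙ, i.e. a basis with Γ + val(v₁) > Γ + val(v₂) > ⋯ > Γ + val(vₙ) (the cosets/orbits of Γ in Γ(V) are strictly decreasing). For 0 ≤ i ≤ n define Vᵢ = {0} ∪ {x ∈ V : val(x) ∈ C₁ ∪ ⋯ ∪ Cᵢ}, where C₁ > C₂ > ⋯ > Cₙ are the orbits of Γ in Γ(V) ordered decreasingly. Then each Vᵢ is a K-linear subspace of V equal to the K-span of {v₁, …, vᵢ}, and 0 = V₀ ⊂ V₁ ⊂ ⋯ ⊂ Vₙ = V is a complete filtration. -/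
/-!
Write a nonzero `x` as `∑ cⱼ vⱼ` and let `k` be the largest index with `cⱼ ≠ 0`. By induction
on the support, `val x ∈ Γ + val vₖ`: when `cₖ vₖ` is added to a sum `y` whose value lies in
the orbit of a smaller index, both `val y` and `val (-y)` lie in an orbit entirely above
`Γ + val vₖ`, so the ultrametric inequality forces `val (cₖ vₖ + y) = val (cₖ vₖ)`. As the
orbits are disjoint, `val x ∈ C₁ ∪ ⋯ ∪ Cᵢ` exactly when `k < i`, i.e. when
`x ∈ span {v₁, …, vᵢ}`.
-/

open AddAction Submodule

section Ultrametric

variable {V ΓV : Type*} [AddCommGroup V] [LinearOrder ΓV] {val : V → ΓV}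

theorem add_ne_zero_and_val_add_eq_left
    (hult : ∀ v w : V, v ≠ 0 → w ≠ 0 → v + w ≠ 0 → min (val v) (val w) ≤ val (v + w))
    {a b : V} (ha : a ≠ 0) (hb : b ≠ 0) (hab : val a < val b) (hab' : val a < val (-b)) :
    a + b ≠ 0 ∧ val (a + b) = val a := by
  have hsum : a + b ≠ 0 := by
    intro h
    rw [neg_eq_of_add_eq_zero_left h] at hab'
    exact hab'.false
  refine ⟨hsum, le_antisymm ?_ ?_⟩
  · by_contra! hlt
    have h := hult (a + b) (-b) hsum (neg_ne_zero.mpr hb) (by simpa using ha)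
    rw [add_neg_cancel_right] at h
    exact (lt_min hlt hab').not_ge h
  · simpa [min_eq_left hab.le] using hult a b ha hb hsum

end Ultrametric

section Splitting

variable {K V Γ ΓV ι : Type*} [AddMonoid Γ] [AddAction Γ ΓV] {valK : K → Γ} {val : V → ΓV}

theorem val_smul_mem_orbit [Zero K] [Zero V] [SMul K V]
    (hscalar : ∀ (a : K) (v : V), a ≠ 0 → v ≠ 0 → val (a • v) = valK a +ᵥ val v)
    {c : K} {x : V} (hc : c ≠ 0) (hx : x ≠ 0) : val (c • x) ∈ orbit Γ (val x) := by
  rw [hscalar c x hc hx]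
  exact mem_orbit _ _

variable [LinearOrder ΓV] [LinearOrder ι]

variable (Γ) in
def IsSplittingFamily (val : V → ΓV) (v : ι → V) : Prop :=
  ∀ ⦃i j⦄, i < j → ∀ y ∈ orbit Γ (val (v i)), ∀ z ∈ orbit Γ (val (v j)), z < y

theorem IsSplittingFamily.notMem_orbit {v : ι → V} (hv : IsSplittingFamily Γ val v) {i j : ι}
    (hij : i ≠ j) {y : ΓV} (hi : y ∈ orbit Γ (val (v i))) : y ∉ orbit Γ (val (v j)) := fun hj =>
  hij.lt_or_gt.elim (fun h => (hv h y hi y hj).false) (fun h => (hv h y hj y hi).false)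

variable [Field K] [AddCommGroup V] [Module K V]

theorem smul_add_ne_zero_and_val_mem_orbit
    (hscalar : ∀ (a : K) (v : V), a ≠ 0 → v ≠ 0 → val (a • v) = valK a +ᵥ val v)
    (hult : ∀ v w : V, v ≠ 0 → w ≠ 0 → v + w ≠ 0 → min (val v) (val w) ≤ val (v + w))
    {v : ι → V} (hv : IsSplittingFamily Γ val v) {a m : ι} (hma : m < a) {c : K} (hc : c ≠ 0)
    (ha : v a ≠ 0) {y : V} (hy : y ≠ 0) (hym : val y ∈ orbit Γ (val (v m))) :
    c • v a + y ≠ 0 ∧ val (c • v a + y) ∈ orbit Γ (val (v a)) := by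
  have hca := val_smul_mem_orbit hscalar hc ha
  have hneg : val (-y) ∈ orbit Γ (val (v m)) := by
    rw [← neg_one_smul K y, hscalar _ _ (neg_ne_zero.mpr one_ne_zero) hy]
    exact mem_orbit_of_mem_orbit _ hym
  obtain ⟨hne, heq⟩ := add_ne_zero_and_val_add_eq_left hult (smul_ne_zero hc ha) hy
    (hv hma _ hym _ hca) (hv hma _ hneg _ hca)
  exact ⟨hne, heq ▸ hca⟩

theorem sum_smul_ne_zero_and_val_mem_orbit
    (hscalar : ∀ (a : K) (v : V), a ≠ 0 → v ≠ 0 → val (a • v) = valK a +ᵥ val v)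
    (hult : ∀ v w : V, v ≠ 0 → w ≠ 0 → v + w ≠ 0 → min (val v) (val w) ≤ val (v + w))
    {v : ι → V} (hv : IsSplittingFamily Γ val v) (hv0 : ∀ i, v i ≠ 0) (c : ι → K)
    (s : Finset ι) (hs : s.Nonempty) (hc : ∀ j ∈ s, c j ≠ 0) :
    ∑ j ∈ s, c j • v j ≠ 0 ∧ val (∑ j ∈ s, c j • v j) ∈ orbit Γ (val (v (s.max' hs))) := by
  classical
  induction s using Finset.induction_on_max with
  | empty => exact absurd hs Finset.not_nonempty_empty
  | insert a s hlt ih =>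
    have ha : a ∉ s := fun h => (hlt a h).false
    have hca : c a ≠ 0 := hc a (Finset.mem_insert_self a s)
    rw [Finset.sum_insert ha]
    rcases s.eq_empty_or_nonempty with rfl | hs'
    · simp only [Finset.sum_empty, add_zero, Finset.max'_singleton, insert_empty_eq]
      exact ⟨smul_ne_zero hca (hv0 a), val_smul_mem_orbit hscalar hca (hv0 a)⟩
    · have hmax : (insert a s).max' hs = a := by
        rw [Finset.max'_insert a s hs', max_eq_left (hlt _ (s.max'_mem hs')).le]
      obtain ⟨hne, hmem⟩ := ih hs' fun j hj => hc j (Finset.mem_insert_of_mem hj)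
      rw [hmax]
      exact smul_add_ne_zero_and_val_mem_orbit hscalar hult hv (hlt _ (s.max'_mem hs')) hca
        (hv0 a) hne hmem

theorem IsSplittingFamily.mem_span_image_iff
    (hscalar : ∀ (a : K) (v : V), a ≠ 0 → v ≠ 0 → val (a • v) = valK a +ᵥ val v)
    (hult : ∀ v w : V, v ≠ 0 → w ≠ 0 → v + w ≠ 0 → min (val v) (val w) ≤ val (v + w))
    {v : ι → V} (hv : IsSplittingFamily Γ val v) (hli : LinearIndependent K v)
    (hspan : ⊤ ≤ span K (Set.range v)) {s : Set ι} (hs : IsLowerSet s) {x : V} (hx : x ≠ 0) :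
    x ∈ span K (v '' s) ↔ ∃ j ∈ s, val x ∈ orbit Γ (val (v j)) := by
  let b := Module.Basis.mk hli hspan
  have hb : ⇑b = v := Module.Basis.coe_mk hli hspan
  have hsupp : (b.repr x).support.Nonempty :=
    Finsupp.support_nonempty_iff.mpr (b.repr.map_ne_zero_iff.mpr hx)
  set k := (b.repr x).support.max' hsupp
  have hk : val x ∈ orbit Γ (val (v k)) := by
    have hxsum : ∑ j ∈ (b.repr x).support, b.repr x j • v j = x := by
      rw [← hb]
      exact b.linearCombination_repr x
    simpa only [hxsum] using (sum_smul_ne_zero_and_val_mem_orbit hscalar hult hv hli.ne_zero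
      (b.repr x) _ hsupp fun j hj => Finsupp.mem_support_iff.mp hj).2
  rw [← hb, b.mem_span_image, hb]
  constructor
  · exact fun hsub => ⟨k, hsub (Finset.max'_mem _ _), hk⟩
  · rintro ⟨j, hj, hjx⟩
    obtain rfl : k = j := by_contra fun hne => hv.notMem_orbit hne hk hjx
    exact fun i hi => hs (Finset.le_max' _ i hi) hj

end Splitting

theorem LinearIndependent.span_image_lt_span_image {R M ι : Type*} [Ring R] [Nontrivial R]
    [AddCommGroup M] [Module R M] {v : ι → M} (hv : LinearIndependent R v) {s t : Set ι}
    (hst : s ⊂ t) : span R (v '' s) < span R (v '' t) := by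
  obtain ⟨j, hjt, hjs⟩ := Set.exists_of_ssubset hst
  refine (span_mono (Set.image_mono hst.subset)).lt_of_ne fun heq => hv.notMem_span_image hjs ?_
  exact heq ▸ subset_span (Set.mem_image_of_mem v hjt)
theorem valued_vector_space_splitting_basis_filtration_general
    (K : Type*) [Field K] (V : Type*) [AddCommGroup V] [Module K V]
    (Γ : Type*) [AddCommGroup Γ]
    (ΓV : Type*) [LinearOrder ΓV] [AddAction Γ ΓV]
    (valK : K → Γ) (val : V → ΓV)
    (hscalar : ∀ (a : K) (v : V), a ≠ 0 → v ≠ 0 → val (a • v) = valK a +ᵥ val v)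
    (hult : ∀ v w : V, v ≠ 0 → w ≠ 0 → v + w ≠ 0 → min (val v) (val w) ≤ val (v + w))
    (n : ℕ) (v : Fin n → V)
    (hli : LinearIndependent K v)
    (hspan : Submodule.span K (Set.range v) = ⊤)
    -- splitting basis: the orbit of `val (v i)` lies strictly above that of
    -- `val (v j)` whenever `i < j`
    (hsplit : ∀ i j : Fin n, i < j → ∀ y z : ΓV,
      (∃ γ : Γ, γ +ᵥ val (v i) = y) → (∃ γ : Γ, γ +ᵥ val (v j) = z) → z < y) :
    (∀ i : ℕ, i ≤ n →
      ({0} ∪ {x : V | x ≠ 0 ∧ ∃ j : Fin n, (j : ℕ) < i ∧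
          ∃ γ : Γ, γ +ᵥ val (v j) = val x} : Set V)
        = ↑(Submodule.span K (v '' {j : Fin n | (j : ℕ) < i})))
    ∧ (∀ i k : ℕ, i < k → k ≤ n →
        Submodule.span K (v '' {j : Fin n | (j : ℕ) < i})
          < Submodule.span K (v '' {j : Fin n | (j : ℕ) < k}))
    ∧ Submodule.span K (v '' {j : Fin n | (j : ℕ) < 0}) = ⊥
    ∧ Submodule.span K (v '' {j : Fin n | (j : ℕ) < n}) = ⊤ := by
  have hv : IsSplittingFamily Γ val v := fun i j hij y hy z hz => hsplit i j hij y z hy hz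
  have hlower (i : ℕ) : IsLowerSet {j : Fin n | (j : ℕ) < i} :=
    fun _ b hle h => show (b : ℕ) < i from lt_of_le_of_lt hle h
  refine ⟨fun i _ => ?_, fun i k hik hkn => ?_, by simp, by simp [hspan]⟩
  · ext x
    rcases eq_or_ne x 0 with rfl | hx
    · simp
    · rw [SetLike.mem_coe, hv.mem_span_image_iff hscalar hult hli hspan.ge (hlower i) hx]
      simp [hx, mem_orbit_iff]
  · refine hli.span_image_lt_span_image ((Set.ssubset_iff_of_subset ?_).mpr ?_)
    · exact fun j hj => lt_trans hj hik
    · exact ⟨⟨i, by omega⟩, hik, by simp⟩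

/-- For a split `n`-dimensional valued vector space with splitting basis
`v₁, …, vₙ` (orbits of the valuations strictly decreasing), the sets
`Vᵢ = {0} ∪ {x : val x ∈ C₁ ∪ ⋯ ∪ Cᵢ}` equal the spans of `{v₁,…,vᵢ}`, and
they form a complete (strictly increasing) filtration from `0` to `V`. -/
theorem valued_vector_space_splitting_basis_filtration
    (K : Type*) [Field K] (V : Type*) [AddCommGroup V] [Module K V]
    (Γ : Type*) [AddCommGroup Γ] [LinearOrder Γ] [IsOrderedAddMonoid Γ]
    (ΓV : Type*) [LinearOrder ΓV] [AddAction Γ ΓV]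
    (valK : K → Γ) (val : V → ΓV)
    (hmono1 : ∀ γ : Γ, StrictMono fun x : ΓV => γ +ᵥ x)
    (hmono2 : ∀ x : ΓV, StrictMono fun γ : Γ => γ +ᵥ x)
    (hvalK : ∀ a b : K, a ≠ 0 → b ≠ 0 → valK (a * b) = valK a + valK b)
    (hsurj : ∀ g : ΓV, ∃ v : V, v ≠ 0 ∧ val v = g)
    (hscalar : ∀ (a : K) (v : V), a ≠ 0 → v ≠ 0 → val (a • v) = valK a +ᵥ val v)
    (hult : ∀ v w : V, v ≠ 0 → w ≠ 0 → v + w ≠ 0 → min (val v) (val w) ≤ val (v + w))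
    (n : ℕ) (v : Fin n → V)
    (hli : LinearIndependent K v)
    (hspan : Submodule.span K (Set.range v) = ⊤)
    -- splitting basis: the orbit of `val (v i)` lies strictly above that of
    -- `val (v j)` whenever `i < j`
    (hsplit : ∀ i j : Fin n, i < j → ∀ y z : ΓV,
      (∃ γ : Γ, γ +ᵥ val (v i) = y) → (∃ γ : Γ, γ +ᵥ val (v j) = z) → z < y) :
    (∀ i : ℕ, i ≤ n →
      ({0} ∪ {x : V | x ≠ 0 ∧ ∃ j : Fin n, (j : ℕ) < i ∧
          ∃ γ : Γ, γ +ᵥ val (v j) = val x} : Set V)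
        = ↑(Submodule.span K (v '' {j : Fin n | (j : ℕ) < i})))
    ∧ (∀ i k : ℕ, i < k → k ≤ n →
        Submodule.span K (v '' {j : Fin n | (j : ℕ) < i})
          < Submodule.span K (v '' {j : Fin n | (j : ℕ) < k}))
    ∧ Submodule.span K (v '' {j : Fin n | (j : ℕ) < 0}) = ⊥
    ∧ Submodule.span K (v '' {j : Fin n | (j : ℕ) < n}) = ⊤ :=
  valued_vector_space_splitting_basis_filtration_general K V Γ ΓV valK val hscalar hult n v hli
    hspan hsplit
end
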